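/- Floquet discriminant of the domain wall: Let Γ₀(x) = [[0, e^{−2ix}],[e^{2ix}, 0]] (the matrix of the domain wall m = (cos 2x, sin 2x, 0)). Let λ ∈ ℂ and let w ∈ ℂ satisfy w² = 1 + λ². If Y: ℝ → M₂(ℂ) solves Y'(x) = iλ Γ₀(x) Y(x) with Y(0) = I, then trace(Y(2π)) = 2 cos(2πw). -/

import Mathlib

/-!
The gauge `U(x) = diag(e^{ix}, e^{-ix})` conjugates `Γ₀(x)` to `σ₁` and equals `I` at `x = 0` and
`x = 2π`. Hence `Z = U Y` solves the constant-coefficient system `Z' = A Z`, `Z(0) = I`, with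
`A = i(σ₃ + λσ₁)`, and `Z(2π) = Y(2π)`. As `A² = -w² I`, the matrix
`E(x) = cos(wx) I - (sin(wx)/w) A` satisfies `E' = -E A`, so `E(x) Z(x)` is constant, equal to `I`.
But `E(x)` is also the inverse of `cos(wx) I + (sin(wx)/w) A`, which is therefore `Z(x)`; since
`tr A = 0`, `tr Y(2π) = 2 cos(2πw)`.
-/

open Matrix

noncomputable section

/-- The matrix of the domain wall `m = (cos 2x, sin 2x, 0)`:
`Γ₀(x) = [[0, e^{−2ix}],[e^{2ix}, 0]]`. -/
def Gamma0 (x : ℝ) : Matrix (Fin 2) (Fin 2) ℂ :=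
  !![0, Complex.exp (-(2 * Complex.I * (x : ℂ)));
     Complex.exp (2 * Complex.I * (x : ℂ)), 0]

open Complex
open scoped Matrix.Norms.Elementwise

section MatrixCalculus

variable {𝕜 : Type*} [NontriviallyNormedField 𝕜] {x : 𝕜}

theorem hasDerivAt_matrix_iff {E : Type*} [NormedAddCommGroup E] [NormedSpace 𝕜 E]
    {m n : Type*} [Fintype n] {Y : 𝕜 → Matrix m n E} {Y' : Matrix m n E} :
    HasDerivAt Y Y' x ↔ ∀ i j, HasDerivAt (fun y => Y y i j) (Y' i j) x :=
  hasDerivAt_pi.trans (forall_congr' fun _ => hasDerivAt_pi)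

theorem HasDerivAt.matrix_mul {𝔸 : Type*} [NormedRing 𝔸] [NormedAlgebra 𝕜 𝔸]
    {l m n : Type*} [Fintype m] [Fintype n] {Y : 𝕜 → Matrix l m 𝔸} {Z : 𝕜 → Matrix m n 𝔸}
    {Y' : Matrix l m 𝔸} {Z' : Matrix m n 𝔸} (hY : HasDerivAt Y Y' x) (hZ : HasDerivAt Z Z' x) :
    HasDerivAt (fun y => Y y * Z y) (Y' * Z x + Y x * Z') x := by
  rw [hasDerivAt_matrix_iff] at hY hZ ⊢
  intro i j
  simpa [mul_apply, Finset.sum_add_distrib] using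
    HasDerivAt.fun_sum (u := .univ) fun k _ => (hY i k).fun_mul (hZ k j)

end MatrixCalculus

section SinDiv

/-- `sin (w x) / w`, continued by `x` at `w = 0`: the solution of `s'' = -w² s`, `s 0 = 0`,
`s' 0 = 1` for every `w`. -/
def sinDiv (w : ℂ) (x : ℝ) : ℂ := if w = 0 then x else sin (w * x) / w

variable (w : ℂ) (x : ℝ)

@[simp]
theorem sinDiv_zero : sinDiv w 0 = 0 := by simp [sinDiv]

theorem hasDerivAt_mul_ofReal : HasDerivAt (fun y : ℝ => w * y) w x := by
  simpa using ((hasDerivAt_id x).ofReal_comp).const_mul w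

theorem hasDerivAt_sinDiv : HasDerivAt (sinDiv w) (cos (w * x)) x := by
  unfold sinDiv
  split_ifs with hw
  · simpa [hw] using (hasDerivAt_id x).ofReal_comp
  · have h := ((hasDerivAt_sin (w * x)).comp x (hasDerivAt_mul_ofReal w x)).div_const w
    rwa [mul_div_cancel_right₀ _ hw] at h

theorem hasDerivAt_cos_mul_ofReal :
    HasDerivAt (fun y : ℝ => cos (w * y)) (-(w ^ 2 * sinDiv w x)) x := by
  refine ((hasDerivAt_cos (w * x)).comp x (hasDerivAt_mul_ofReal w x)).congr_deriv ?_
  unfold sinDiv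
  split_ifs with hw
  · simp [hw]
  · field_simp

theorem cos_sq_add_sq_mul_sinDiv_sq : cos (w * x) ^ 2 + w ^ 2 * sinDiv w x ^ 2 = 1 := by
  unfold sinDiv
  split_ifs with hw
  · simp [hw]
  · field_simp
    exact cos_sq_add_sin_sq _

end SinDiv

section CosSinSolution

variable {n : Type*} [Fintype n] [DecidableEq n] {A : Matrix n n ℂ} {w : ℂ}

theorem hasDerivAt_cos_smul_sub_sinDiv_smul (hA : A * A = -(w ^ 2) • 1) (x : ℝ) :
    HasDerivAt (fun y : ℝ => cos (w * y) • (1 : Matrix n n ℂ) - sinDiv w y • A)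
      (-((cos (w * x) • 1 - sinDiv w x • A) * A)) x := by
  refine (((hasDerivAt_cos_mul_ofReal w x).smul_const 1).sub
    ((hasDerivAt_sinDiv w x).smul_const A)).congr_deriv ?_
  rw [sub_mul, smul_mul_assoc, smul_mul_assoc, one_mul, hA]
  module

theorem cos_smul_sub_sinDiv_smul_mul_add (hA : A * A = -(w ^ 2) • 1) (x : ℝ) :
    (cos (w * x) • (1 : Matrix n n ℂ) - sinDiv w x • A) * (cos (w * x) • 1 + sinDiv w x • A) =
      1 := by
  simp only [sub_mul, mul_add, smul_mul_smul, one_mul, mul_one, hA]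
  calc _ = (cos (w * x) ^ 2 + w ^ 2 * sinDiv w x ^ 2) • (1 : Matrix n n ℂ) := by module
    _ = 1 := by rw [cos_sq_add_sq_mul_sinDiv_sq, one_smul]

theorem eq_cos_smul_add_sinDiv_smul_of_hasDerivAt (hA : A * A = -(w ^ 2) • 1)
    {Z : ℝ → Matrix n n ℂ} (hZ : ∀ x, HasDerivAt Z (A * Z x) x) (hZ0 : Z 0 = 1) (x : ℝ) :
    Z x = cos (w * x) • 1 + sinDiv w x • A := by
  set E := fun y : ℝ => cos (w * y) • (1 : Matrix n n ℂ) - sinDiv w y • A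
  have hEZ : ∀ y, HasDerivAt (fun y => E y * Z y) 0 y := fun y => by
    simpa [neg_mul, mul_assoc] using
      (hasDerivAt_cos_smul_sub_sinDiv_smul hA y).matrix_mul (hZ y)
  have hEZ_const : E x * Z x = 1 := by
    simpa [E, hZ0] using is_const_of_deriv_eq_zero (fun y => (hEZ y).differentiableAt)
      (fun y => (hEZ y).deriv) x 0
  exact (inv_eq_right_inv hEZ_const).symm.trans
    (inv_eq_right_inv (cos_smul_sub_sinDiv_smul_mul_add hA x))

end CosSinSolution

section DomainWall

def domainWallGauge (x : ℝ) : Matrix (Fin 2) (Fin 2) ℂ :=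
  !![exp (I * x), 0; 0, exp (-(I * x))]

def gaugedLaxMatrix (lam : ℂ) : Matrix (Fin 2) (Fin 2) ℂ :=
  !![I, I * lam; I * lam, -I]

theorem domainWallGauge_mul_Gamma0 (x : ℝ) :
    domainWallGauge x * Gamma0 x = !![0, 1; 1, 0] * domainWallGauge x := by
  have h1 : exp (I * x) * exp (-(2 * I * x)) = exp (-(I * x)) := by
    rw [← exp_add]; ring_nf
  have h2 : exp (-(I * x)) * exp (2 * I * x) = exp (I * x) := by
    rw [← exp_add]; ring_nf
  ext i j
  fin_cases i <;> fin_cases j <;>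
    simp [domainWallGauge, Gamma0, mul_apply, Fin.sum_univ_two, h1, h2]

theorem hasDerivAt_domainWallGauge (x : ℝ) :
    HasDerivAt domainWallGauge (!![I, 0; 0, -I] * domainWallGauge x) x := by
  rw [hasDerivAt_matrix_iff]
  intro i j
  fin_cases i <;> fin_cases j <;> simp [domainWallGauge, mul_apply, Fin.sum_univ_two]
  · simpa [mul_comm] using (hasDerivAt_mul_ofReal I x).cexp
  · exact hasDerivAt_const x 0
  · exact hasDerivAt_const x 0
  · simpa [mul_comm] using (hasDerivAt_mul_ofReal I x).fun_neg.cexp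

theorem domainWallGauge_zero : domainWallGauge 0 = 1 := by
  simp [domainWallGauge, one_fin_two]

theorem domainWallGauge_two_pi : domainWallGauge (2 * Real.pi) = 1 := by
  have h : exp (I * (2 * Real.pi : ℝ)) = 1 := by
    rw [← exp_two_pi_mul_I]; push_cast; ring_nf
  rw [domainWallGauge, exp_neg, h, inv_one, one_fin_two]

theorem gaugedLaxMatrix_mul_self (lam : ℂ) :
    gaugedLaxMatrix lam * gaugedLaxMatrix lam = -(1 + lam ^ 2) • 1 := by
  ext i j
  fin_cases i <;> fin_cases j <;> simp [gaugedLaxMatrix, mul_apply, Fin.sum_univ_two]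
  · linear_combination lam ^ 2 * I_sq
  · ring
  · ring
  · linear_combination lam ^ 2 * I_sq

theorem trace_gaugedLaxMatrix (lam : ℂ) : trace (gaugedLaxMatrix lam) = 0 := by
  simp [gaugedLaxMatrix, trace_fin_two]

theorem hasDerivAt_domainWallGauge_mul {lam : ℂ} {Y : ℝ → Matrix (Fin 2) (Fin 2) ℂ} {x : ℝ}
    (hY : HasDerivAt Y ((I * lam) • (Gamma0 x * Y x)) x) :
    HasDerivAt (fun y => domainWallGauge y * Y y)
      (gaugedLaxMatrix lam * (domainWallGauge x * Y x)) x := by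
  refine ((hasDerivAt_domainWallGauge x).matrix_mul hY).congr_deriv ?_
  rw [mul_smul_comm, ← mul_assoc, domainWallGauge_mul_Gamma0, mul_assoc, mul_assoc,
    ← smul_mul_assoc, ← add_mul]
  congr 1
  ext i j
  fin_cases i <;> fin_cases j <;> simp [gaugedLaxMatrix]

end DomainWall

/-- **Floquet discriminant of the domain wall.**
If `w² = 1 + λ²` and `Y` is the fundamental matrix solution of `Y' = iλΓ₀Y`, `Y(0) = I`,
then `trace Y(2π) = 2 cos(2πw)`. -/
theorem domain_wall_floquet_discriminant
    (lam w : ℂ) (hw : w ^ 2 = 1 + lam ^ 2)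
    (Y : ℝ → Matrix (Fin 2) (Fin 2) ℂ)
    (hY0 : Y 0 = 1)
    (hY_ode : ∀ x i j, HasDerivAt (fun y => Y y i j)
      (((Complex.I * lam) • (Gamma0 x * Y x)) i j) x) :
    Matrix.trace (Y (2 * Real.pi)) = 2 * Complex.cos (((2 * Real.pi : ℝ) : ℂ) * w) := by
  have hA : gaugedLaxMatrix lam * gaugedLaxMatrix lam = -(w ^ 2) • 1 := by
    rw [hw, gaugedLaxMatrix_mul_self]
  have hZ (x : ℝ) : HasDerivAt (fun y => domainWallGauge y * Y y)
      (gaugedLaxMatrix lam * (domainWallGauge x * Y x)) x :=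
    hasDerivAt_domainWallGauge_mul (hasDerivAt_matrix_iff.2 (hY_ode x))
  have hY_period := eq_cos_smul_add_sinDiv_smul_of_hasDerivAt hA hZ
    (by rw [domainWallGauge_zero, hY0, one_mul]) (2 * Real.pi)
  rw [domainWallGauge_two_pi, one_mul] at hY_period
  rw [hY_period, trace_add, trace_smul, trace_smul, trace_gaugedLaxMatrix, trace_one, mul_comm w]
  simp [mul_comm]
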